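/- Let V_{AS;0}(s̃) := min_a B(s̃)·Q* (the minimum entry of the row vector B(s̃)Q*). Then V_{AS;0}(s̃) ≤ V*_{M_k}(s̃) for every state s̃ of the sensing-cost MDP M_k; i.e., the zero-sensing-cost always-sense value is a lower bound on the optimal value function of M_k. -/
import Mathlib


open Finset

variable {S A : Type*} [Fintype S] [Fintype A] [DecidableEq S] [Nonempty S] [Nonempty A]

/-- Belief distribution after taking the blind action sequence `l` from root state `s`:
the `s`-th row of the product of the transition matrices along `l`. -/
noncomputable def belief (T : A → Matrix S S ℝ) (s : S) (l : List A) : S → ℝ :=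
  fun s' => ((l.map T).prod) s s'

/-- Expected one-step cost of action `a` under belief `B`. -/
def beliefCost (C : A → S → ℝ) (B : S → ℝ) (a : A) : ℝ := ∑ s, B s * C a s

/-- Belief obtained from `B` by one further (blind) transition under action `a`. -/
def beliefStep (T : A → Matrix S S ℝ) (B : S → ℝ) (a : A) : S → ℝ :=
  fun s' => ∑ s, B s * T a s s'

/-- Bellman optimality equation for the sensing-cost MDP `M_k`: at every state
`(s, l)` the value is the minimum, over actions `a`, of the blind continuation and
the sensing continuation. -/
def IsBellmanMk (T : A → Matrix S S ℝ) (C : A → S → ℝ) (α k : ℝ)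
    (V : S → List A → ℝ) : Prop :=
  ∀ (s : S) (l : List A),
    V s l = Finset.univ.inf' Finset.univ_nonempty (fun a : A =>
      min (beliefCost C (belief T s l) a + α * V s (l ++ [a]))
          (beliefCost C (belief T s l) a + k
            + α * ∑ j, beliefStep T (belief T s l) a j * V j []))

/-- Bellman optimality equations for the depth-`N` truncation `M_{k,N}`: below layer `N`
both blind and sensing actions are available; at layer `N` sensing is forced. -/
def IsBellmanMkTrunc (T : A → Matrix S S ℝ) (C : A → S → ℝ) (α k : ℝ) (N : ℕ)
    (V : S → List A → ℝ) : Prop :=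
  (∀ (s : S) (l : List A), l.length < N →
    V s l = Finset.univ.inf' Finset.univ_nonempty (fun a : A =>
      min (beliefCost C (belief T s l) a + α * V s (l ++ [a]))
          (beliefCost C (belief T s l) a + k
            + α * ∑ j, beliefStep T (belief T s l) a j * V j []))) ∧
  (∀ (s : S) (l : List A), l.length = N →
    V s l = Finset.univ.inf' Finset.univ_nonempty (fun a : A =>
      beliefCost C (belief T s l) a + k
        + α * ∑ j, beliefStep T (belief T s l) a j * V j []))
/-- Expected cumulative discounted cost of the blind action sequence `l` from root `s`. -/
noncomputable def Zcost (T : A → Matrix S S ℝ) (C : A → S → ℝ) (α : ℝ)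
    (s : S) (l : List A) : ℝ :=
  ∑ i : Fin l.length, α ^ (i : ℕ) * beliefCost C (belief T s (l.take i)) (l.get i)

/-- Zero-sensing-cost always-sense value at belief `B`: `min_a B·Q*(a)`. -/
noncomputable def VAS0 (Qstar : A → S → ℝ) (B : S → ℝ) : ℝ :=
  Finset.univ.inf' Finset.univ_nonempty (fun a : A => ∑ s, B s * Qstar a s)

section Aux

variable (T : A → Matrix S S ℝ)

lemma belief_nonneg (hT : ∀ a s s', 0 ≤ T a s s') (s : S) (l : List A) (s' : S) :
    0 ≤ belief T s l s' := by
  induction l generalizing s with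
  | nil =>
    simp only [belief, List.map_nil, List.prod_nil, Matrix.one_apply]
    split_ifs <;> norm_num
  | cons a l ih =>
    simp only [belief, List.map_cons, List.prod_cons, Matrix.mul_apply]
    exact Finset.sum_nonneg fun t _ => mul_nonneg (hT a s t) (ih t)

lemma belief_sum_one (hT : ∀ a s, ∑ s', T a s s' = 1) (s : S) (l : List A) :
    ∑ s', belief T s l s' = 1 := by
  induction l generalizing s with
  | nil => simp [belief, Matrix.one_apply]
  | cons a l ih =>
    simp only [belief, List.map_cons, List.prod_cons, Matrix.mul_apply]
    rw [Finset.sum_comm]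
    have : ∀ t : S, ∑ s', T a s t * (List.map T l).prod t s' = T a s t := by
      intro t
      rw [← Finset.mul_sum]
      have := ih t
      simp only [belief] at this
      rw [this, mul_one]
    simp_rw [this]
    exact hT a s

lemma belief_append (s : S) (l : List A) (a : A) :
    belief T s (l ++ [a]) = beliefStep T (belief T s l) a := by
  funext s'
  simp [belief, beliefStep, Matrix.mul_apply]

lemma sum_belief_nil (f : S → ℝ) (s : S) : ∑ s', belief T s [] s' * f s' = f s := by
  simp [belief, Matrix.one_apply]

end Aux

/-- The zero-sensing-cost always-sense value is a lower bound on the optimal value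
function of the sensing-cost MDP `M_k`: `V_{AS;0}(s̃) ≤ V*_{M_k}(s̃)` for every state. -/
theorem VAS0_lower_bound_on_Mk
    (T : A → Matrix S S ℝ) (C : A → S → ℝ) (α k : ℝ)
    (hα0 : 0 < α) (hα1 : α < 1) (hk : 0 < k)
    (hTnonneg : ∀ a s s', 0 ≤ T a s s') (hTsum : ∀ a s, ∑ s', T a s s' = 1)
    (Vstar : S → ℝ) (Qstar : A → S → ℝ)
    (hQstar : ∀ a s, Qstar a s = C a s + α * ∑ s', T a s s' * Vstar s')
    (hBellman : ∀ s, Vstar s =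
      Finset.univ.inf' Finset.univ_nonempty (fun a : A => Qstar a s))
    (V : S → List A → ℝ) (hV : IsBellmanMk T C α k V)
    (hVbdd : ∃ M, ∀ s l, |V s l| ≤ M) :
    ∀ (s : S) (l : List A), VAS0 Qstar (belief T s l) ≤ V s l := by
  classical
  obtain ⟨M, hM⟩ := hVbdd
  set MQ : ℝ := Finset.univ.sup' Finset.univ_nonempty
      (fun p : A × S => |Qstar p.1 p.2|) with hMQ
  have hMQb : ∀ a s, |Qstar a s| ≤ MQ := fun a s =>
    Finset.le_sup' (f := fun p : A × S => |Qstar p.1 p.2|) (Finset.mem_univ (a, s))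
  set D : ℝ := MQ + M with hD
  have hM0 : 0 ≤ M := le_trans (abs_nonneg _) (hM (Classical.arbitrary S) [])
  have hMQ0 : 0 ≤ MQ := le_trans (abs_nonneg _)
    (hMQb (Classical.arbitrary A) (Classical.arbitrary S))
  have hD0 : 0 ≤ D := by positivity
  have hVAS0_le : ∀ (s : S) (l : List A), VAS0 Qstar (belief T s l) ≤ MQ := by
    intro s l
    have a0 : A := Classical.arbitrary A
    refine le_trans (Finset.inf'_le _ (Finset.mem_univ a0)) ?_
    calc ∑ t, belief T s l t * Qstar a0 t
        ≤ ∑ t, belief T s l t * MQ := by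
          refine Finset.sum_le_sum fun t _ => ?_
          exact mul_le_mul_of_nonneg_left
            (le_trans (le_abs_self _) (hMQb a0 t)) (belief_nonneg T hTnonneg s l t)
      _ = MQ := by rw [← Finset.sum_mul, belief_sum_one T hTsum, one_mul]
  have hSumVstar : ∀ (B : S → ℝ), (∀ t, 0 ≤ B t) → ∑ t, B t * Vstar t ≤ VAS0 Qstar B := by
    intro B hB
    refine Finset.le_inf' _ _ fun a _ => ?_
    refine Finset.sum_le_sum fun t _ => ?_
    refine mul_le_mul_of_nonneg_left ?_ (hB t)
    rw [hBellman]
    exact Finset.inf'_le _ (Finset.mem_univ a)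
  have hStep : ∀ (B : S → ℝ) (a : A),
      VAS0 Qstar B ≤ beliefCost C B a + α * ∑ j, beliefStep T B a j * Vstar j := by
    intro B a
    refine le_trans (Finset.inf'_le _ (Finset.mem_univ a)) (le_of_eq ?_)
    simp only [beliefCost, beliefStep, hQstar, mul_add, Finset.mul_sum,
      Finset.sum_add_distrib]
    congr 1
    rw [Finset.sum_comm]
    refine Finset.sum_congr rfl fun t _ => ?_
    simp only [Finset.sum_mul, Finset.mul_sum]
    exact Finset.sum_congr rfl fun j _ => by ring
  have hVAS0nil : ∀ j : S, VAS0 Qstar (belief T j []) = Vstar j := by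
    intro j
    rw [hBellman]
    unfold VAS0
    congr 1
    funext a
    exact sum_belief_nil T (Qstar a) j
  have key : ∀ (n : ℕ) (s : S) (l : List A),
      VAS0 Qstar (belief T s l) ≤ V s l + α ^ n * D := by
    intro n
    induction n with
    | zero =>
      intro s l
      have h1 := hVAS0_le s l
      have h2 := abs_le.mp (hM s l)
      simp only [pow_zero, one_mul, hD]
      linarith [h2.1]
    | succ n ih =>
      intro s l
      set B := belief T s l with hB
      rw [hV s l]
      have hgoal : VAS0 Qstar B - α ^ (n + 1) * D ≤
          Finset.univ.inf' Finset.univ_nonempty (fun a : A =>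
            min (beliefCost C B a + α * V s (l ++ [a]))
                (beliefCost C B a + k
                  + α * ∑ j, beliefStep T B a j * V j [])) := by
        refine Finset.le_inf' _ _ fun a _ => le_min ?_ ?_
        · have hba := belief_append T s l a
          have h1 := ih s (l ++ [a])
          rw [hba] at h1
          have h3 := hSumVstar (beliefStep T B a)
            (fun t => by rw [← hba]; exact belief_nonneg T hTnonneg s _ t)
          have h2 := hStep B a
          have h4 : α * VAS0 Qstar (beliefStep T B a) ≤
              α * (V s (l ++ [a]) + α ^ n * D) :=
            mul_le_mul_of_nonneg_left h1 hα0.le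
          have h5 : α * (∑ j, beliefStep T B a j * Vstar j) ≤
              α * VAS0 Qstar (beliefStep T B a) :=
            mul_le_mul_of_nonneg_left h3 hα0.le
          have hpow : α ^ (n + 1) = α * α ^ n := by ring
          rw [hpow]
          nlinarith [h2, h4, h5]
        · have hba := belief_append T s l a
          have hstepnn : ∀ t, 0 ≤ beliefStep T B a t :=
            fun t => by rw [← hba]; exact belief_nonneg T hTnonneg s _ t
          have hsum1 : ∑ t, beliefStep T B a t = 1 := by
            rw [← hba]; exact belief_sum_one T hTsum s _
          have h6 : ∑ j, beliefStep T B a j * Vstar j - α ^ n * D ≤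
              ∑ j, beliefStep T B a j * V j [] := by
            have h7 : ∀ j, beliefStep T B a j * (Vstar j - α ^ n * D) ≤
                beliefStep T B a j * V j [] := by
              intro j
              refine mul_le_mul_of_nonneg_left ?_ (hstepnn j)
              linarith [ih j [], (hVAS0nil j).le, (hVAS0nil j).ge]
            calc ∑ j, beliefStep T B a j * Vstar j - α ^ n * D
                = ∑ j, beliefStep T B a j * (Vstar j - α ^ n * D) := by
                  simp only [mul_sub, Finset.sum_sub_distrib, ← Finset.sum_mul,
                    hsum1, one_mul]
              _ ≤ ∑ j, beliefStep T B a j * V j [] :=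
                  Finset.sum_le_sum fun j _ => h7 j
          have h2 := hStep B a
          have h8 : α * (∑ j, beliefStep T B a j * Vstar j - α ^ n * D) ≤
              α * ∑ j, beliefStep T B a j * V j [] :=
            mul_le_mul_of_nonneg_left h6 hα0.le
          have hpow : α ^ (n + 1) = α * α ^ n := by ring
          rw [hpow]
          nlinarith [h2, h8]
      linarith [hgoal]
  intro s l
  have hlim : Filter.Tendsto (fun n : ℕ => α ^ n * D) Filter.atTop (nhds 0) := by
    have := (tendsto_pow_atTop_nhds_zero_of_lt_one hα0.le hα1).mul_const D
    simpa using this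
  have hle : VAS0 Qstar (belief T s l) - V s l ≤ 0 :=
    ge_of_tendsto' hlim (fun n => by linarith [key n s l])
  linarith
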